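/- Let (μ(t))_{t≥0} be a solution of the pure selection model such that supp(μ(0)) ∩ [𝔔]_R ≠ ∅. Then the total population converges to the carrying capacity of the fittest class: lim_{t→∞} μ(t)(Q) = K_𝔔. -/

import Mathlib

open MeasureTheory Filter Set Topology

noncomputable section

/-- Birth and mortality rates `f₁`, `f₂` on `ℝ × Q` satisfying assumptions (A1)-(A2). -/
structure EGTRates (Q : Type*) [MetricSpace Q] where
  f₁ : ℝ → Q → ℝ
  f₂ : ℝ → Q → ℝ
  f₁_nonneg : ∀ X q, 0 ≤ f₁ X q
  f₂_nonneg : ∀ X q, 0 ≤ f₂ X q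
  f₁_lip : ∀ C : ℝ, ∃ L : ℝ, 0 ≤ L ∧ ∀ q : Q, ∀ X ∈ Set.Icc (-C) C, ∀ Y ∈ Set.Icc (-C) C,
    |f₁ X q - f₁ Y q| ≤ L * |X - Y|
  f₂_lip : ∀ C : ℝ, ∃ L : ℝ, 0 ≤ L ∧ ∀ q : Q, ∀ X ∈ Set.Icc (-C) C, ∀ Y ∈ Set.Icc (-C) C,
    |f₂ X q - f₂ Y q| ≤ L * |X - Y|
  f₁_anti : ∀ q, AntitoneOn (fun X => f₁ X q) (Set.Ici 0)
  f₂_mono : ∀ q, MonotoneOn (fun X => f₂ X q) (Set.Ici 0)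
  f₁_cont : ∀ X, Continuous fun q => f₁ X q
  f₂_cont : ∀ X, Continuous fun q => f₂ X q
  f₂_inf_pos : ∃ ϖ : ℝ, 0 < ϖ ∧ ∀ q, ϖ ≤ f₂ 0 q

namespace EGTRates

variable {Q : Type*} [MetricSpace Q]

/-- The reproductive number `R(X,q) = f₁(X,q)/f₂(X,q)`. -/
def R (M : EGTRates Q) (X : ℝ) (q : Q) : ℝ := M.f₁ X q / M.f₂ X q

/-- The carrying capacity `K(q)`. -/
def carCap (M : EGTRates Q) (q : Q) : ℝ :=
  if 1 ≤ M.R 0 q then sInf {K : ℝ | 0 ≤ K ∧ M.R K q ≤ 1} else 0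

/-- Assumptions (A3)-(A5) relative to a fittest strategy `𝔔` and a least fit strategy `𝔮`. -/
def Assumptions (M : EGTRates Q) (𝔔 𝔮 : Q) : Prop :=
  (∀ q, M.R 0 q ≤ M.R 0 𝔔) ∧ (∀ q, M.R 0 𝔮 ≤ M.R 0 q) ∧
  (∃ X, 0 ≤ X ∧ M.R X 𝔔 ≤ 1) ∧
  (∀ q qq : Q, ∀ Y : ℝ, 0 ≤ Y →
      (M.R 0 qq < M.R 0 q → M.R Y qq < M.R Y q) ∧
      (M.R 0 q = M.R 0 qq → M.R Y q = M.R Y qq)) ∧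
  (1 ≤ M.R 0 𝔔 → M.R (M.carCap 𝔔) 𝔔 = 1 ∧ ∀ x, 0 ≤ x → M.R x 𝔔 = 1 → x = M.carCap 𝔔) ∧
  (1 ≤ M.R 0 𝔮 → M.R (M.carCap 𝔮) 𝔮 = 1 ∧ ∀ x, 0 ≤ x → M.R x 𝔮 = 1 → x = M.carCap 𝔮)

/-- The class of fittest strategies `[𝔔]_R`. -/
def fittestClass (M : EGTRates Q) (𝔔 : Q) : Set Q := {q | M.R 0 q = M.R 0 𝔔}

end EGTRates

/-- Support of a Borel measure: points all of whose neighborhoods have positive measure. -/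
def msupport {Q : Type*} [MetricSpace Q] [MeasurableSpace Q] (μ : Measure Q) : Set Q :=
  {q | ∀ ε : ℝ, 0 < ε → 0 < μ (Metric.ball q ε)}

/-- A solution of the full selection–mutation model with mutation kernel `γ`. -/
def IsSelMutSolution {Q : Type*} [MetricSpace Q] [MeasurableSpace Q] [BorelSpace Q]
    (M : EGTRates Q) (γ : Q → ProbabilityMeasure Q) (μ : ℝ → Measure Q) : Prop :=
  (∀ t, IsFiniteMeasure (μ t)) ∧
  ∀ t ∈ Set.Ici (0:ℝ), ∀ E : Set Q, MeasurableSet E →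
    HasDerivWithinAt (fun s => (μ s E).toReal)
      ((∫ qq, M.f₁ (μ t Set.univ).toReal qq * ((γ qq : Measure Q) E).toReal ∂(μ t)) -
        ∫ qq in E, M.f₂ (μ t Set.univ).toReal qq ∂(μ t)) (Set.Ici 0) t

/-- A solution of the pure selection (replicator) model. -/
def IsPureSelectionSolution {Q : Type*} [MetricSpace Q] [MeasurableSpace Q] [BorelSpace Q]
    (M : EGTRates Q) (μ : ℝ → Measure Q) : Prop :=
  (∀ t, IsFiniteMeasure (μ t)) ∧
  ∀ t ∈ Set.Ici (0:ℝ), ∀ E : Set Q, MeasurableSet E →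
    HasDerivWithinAt (fun s => (μ s E).toReal)
      (∫ q in E, (M.f₁ (μ t Set.univ).toReal q - M.f₂ (μ t Set.univ).toReal q) ∂(μ t))
      (Set.Ici 0) t

open Real

/-!
Above the carrying capacity `K` of the fittest class every strategy has `R < 1`, so the total
mass `X(t)` cannot cross `K` upwards, and while above `K + ε` it decreases at a fixed positive
rate; hence `X` eventually stays below `K + ε`.

For the lower bound, the mass of a small ball `B` around a fittest point `q₀` of the initial
support stays positive and grows at least at the rate `g(t)` of `q₀` (up to a small error), while
strategies `U` whose fitness is bounded away from the maximum grow at most at rate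
`κ g(t) - ρ`. Thus `μ(U) μ(B)^{-κ}` decays exponentially, and `μ(U)` becomes a negligible fraction
of `X`. From then on, whenever `X ≤ K - ε` the near-fittest strategies make `X` grow
proportionally to itself, so `X` eventually stays above `K - ε`.
-/

theorem image_le_of_deriv_right_nonpos_of_gt {f f' : ℝ → ℝ} {a c : ℝ}
    (hf : ContinuousOn f (Ici a)) (hf' : ∀ x ∈ Ici a, HasDerivWithinAt f (f' x) (Ici x) x)
    (ha : f a ≤ c) (hnonpos : ∀ x ∈ Ici a, c < f x → f' x ≤ 0) : ∀ x ∈ Ici a, f x ≤ c := by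
  intro x hx
  have hxa : 0 < x - a + 1 := by linarith [mem_Ici.1 hx]
  refine le_of_forall_pos_le_add fun δ hδ => ?_
  -- compare with the line of slope `ε` through `(a, c + ε)`, which `f` cannot touch
  set ε := δ / (x - a + 1)
  have hε : 0 < ε := div_pos hδ hxa
  have hline := image_le_of_deriv_right_lt_deriv_boundary' (hf.mono Icc_subset_Ici_self)
    (fun y hy => hf' y hy.1) (B := fun y => c + ε * (y - a + 1)) (B' := fun _ => ε)
    (by linarith) (by fun_prop)
    (fun y _ => by
      simpa using ((((hasDerivAt_id y).sub_const a).add_const 1).const_mul ε).const_add c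
        |>.hasDerivWithinAt)
    (fun y hy hfy => (hnonpos y hy.1 (by rw [hfy]; nlinarith [hy.1])).trans_lt hε)
    ⟨mem_Ici.1 hx, le_rfl⟩
  have hεx : ε * (x - a + 1) = δ := div_mul_cancel₀ δ hxa.ne'
  linarith

theorem eventually_ge_of_deriv_right_ge {f f' : ℝ → ℝ} {a c B η : ℝ} (hη : 0 < η)
    (hf : ContinuousOn f (Ici a)) (hf' : ∀ x ∈ Ici a, HasDerivWithinAt f (f' x) (Ici x) x)
    (hB : ∀ x ∈ Ici a, f x ≤ B) (hgrow : ∀ x ∈ Ici a, f x ≤ c → η ≤ f' x) :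
    ∀ᶠ x in atTop, c ≤ f x := by
  obtain ⟨b, hb, hcb⟩ : ∃ b ∈ Ici a, c ≤ f b := by
    by_contra! hlt
    set b := a + (B - f a) / η + 1
    have hab : a ≤ b := by
      have : 0 ≤ (B - f a) / η := div_nonneg (by linarith [hB a self_mem_Ici]) hη.le
      linarith
    have hlin := image_le_of_deriv_right_le_deriv_boundary (f := fun x => f a + η * (x - a))
      (f' := fun _ => η) (by fun_prop)
      (fun y _ => by simpa using (((hasDerivAt_id y).sub_const a).const_mul η).const_add (f a)
        |>.hasDerivWithinAt)
      (by simp) (hf.mono Icc_subset_Ici_self) (fun y hy => hf' y hy.1)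
      (fun y hy => hgrow y hy.1 (hlt y hy.1).le) ⟨hab, le_rfl⟩
    have : η * (b - a) = B - f a + η := by
      simp only [b]; field_simp; ring
    linarith [hB b hab]
  filter_upwards [eventually_ge_atTop b] with x hx
  have hstay := image_le_of_deriv_right_nonpos_of_gt (f := -f) (f' := -f') (a := b) (c := -c)
    (hf.neg.mono (Ici_subset_Ici.2 hb))
    (fun y hy => (hf' y (mem_Ici.2 (le_trans hb hy))).neg) (neg_le_neg hcb)
    (fun y hy hlt => neg_nonpos.2 (hη.le.trans
      (hgrow y (mem_Ici.2 (le_trans hb hy)) (by simp only [Pi.neg_apply] at hlt; linarith))))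
    x hx
  simpa using hstay

theorem eventually_ge_of_deriv_right_ge_mul {f f' : ℝ → ℝ} {a c B β : ℝ} (hβ : 0 < β)
    (hf : ContinuousOn f (Ici a)) (hf' : ∀ x ∈ Ici a, HasDerivWithinAt f (f' x) (Ici x) x)
    (hpos : ∀ x ∈ Ici a, 0 < f x) (hB : ∀ x ∈ Ici a, f x ≤ B)
    (hgrow : ∀ x ∈ Ici a, f x ≤ c → β * f x ≤ f' x) : ∀ᶠ x in atTop, c ≤ f x := by
  rcases le_or_gt c 0 with hc | hc
  · filter_upwards [eventually_ge_atTop a] with x hx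
    exact hc.trans (hpos x hx).le
  have hlog := eventually_ge_of_deriv_right_ge (f := fun x => log (f x)) (c := log c)
    (B := log B) hβ (hf.log fun x hx => (hpos x hx).ne')
    (fun x hx => (hf' x hx).log (hpos x hx).ne')
    (fun x hx => log_le_log (hpos x hx) (hB x hx))
    (fun x hx hle => by
      rw [le_div_iff₀ (hpos x hx)]
      exact hgrow x hx ((log_le_log_iff (hpos x hx) hc).1 hle))
  filter_upwards [hlog, eventually_ge_atTop a] with x hlogx hx
  exact (log_le_log_iff hc (hpos x hx)).1 hlogx

theorem le_mul_exp_of_deriv_right_le {f f' : ℝ → ℝ} {a β : ℝ}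
    (hf : ContinuousOn f (Ici a)) (hf' : ∀ x ∈ Ici a, HasDerivWithinAt f (f' x) (Ici x) x)
    (hle : ∀ x ∈ Ici a, f' x ≤ β * f x) : ∀ x ∈ Ici a, f x ≤ f a * exp (β * (x - a)) := by
  intro x hx
  have := le_gronwallBound_of_liminf_deriv_right_le (K := β) (ε := 0) (hf.mono Icc_subset_Ici_self)
    (fun y hy _ hr => (hf' y hy.1).liminf_right_slope_le hr) le_rfl
    (fun y hy => by simpa using hle y hy.1) x ⟨mem_Ici.1 hx, le_rfl⟩
  rwa [gronwallBound_ε0] at this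

theorem mul_exp_le_of_deriv_right_ge {f f' : ℝ → ℝ} {a β : ℝ}
    (hf : ContinuousOn f (Ici a)) (hf' : ∀ x ∈ Ici a, HasDerivWithinAt f (f' x) (Ici x) x)
    (hge : ∀ x ∈ Ici a, β * f x ≤ f' x) : ∀ x ∈ Ici a, f a * exp (β * (x - a)) ≤ f x := by
  intro x hx
  have := le_mul_exp_of_deriv_right_le (f := -f) (f' := -f') hf.neg (fun y hy => (hf' y hy).neg)
    (fun y hy => by simpa using hge y hy) x hx
  simpa using this

theorem mul_rpow_neg_le_of_deriv_right {u u' m m' g : ℝ → ℝ} {a κ ρ : ℝ}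
    (hu : ContinuousOn u (Ici a)) (hu' : ∀ t ∈ Ici a, HasDerivWithinAt u (u' t) (Ici t) t)
    (hm : ContinuousOn m (Ici a)) (hm' : ∀ t ∈ Ici a, HasDerivWithinAt m (m' t) (Ici t) t)
    (hu0 : ∀ t ∈ Ici a, 0 ≤ u t) (hmpos : ∀ t ∈ Ici a, 0 < m t) (hκ : 0 ≤ κ)
    (hule : ∀ t ∈ Ici a, u' t ≤ (κ * g t - ρ) * u t) (hmge : ∀ t ∈ Ici a, g t * m t ≤ m' t) :
    ∀ t ∈ Ici a, u t * m t ^ (-κ) ≤ u a * m a ^ (-κ) * exp (-ρ * (t - a)) := by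
  refine le_mul_exp_of_deriv_right_le
    (hu.mul (hm.rpow_const fun t ht => Or.inl (hmpos t ht).ne'))
    (fun t ht => (hu' t ht).mul ((hm' t ht).rpow_const (Or.inl (hmpos t ht).ne'))) fun t ht => ?_
  have hmt := hmpos t ht
  have hP : 0 < m t ^ (-κ) := rpow_pos_of_pos hmt _
  rw [rpow_sub_one hmt.ne']
  have hm'term : u t * (m' t * -κ * (m t ^ (-κ) / m t)) ≤
      u t * (g t * m t * -κ * (m t ^ (-κ) / m t)) := by
    have := mul_le_mul_of_nonneg_left (hmge t ht) (mul_nonneg hκ (hu0 t ht))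
    have := div_pos hP hmt
    nlinarith
  calc _ ≤ (κ * g t - ρ) * u t * m t ^ (-κ) + u t * (g t * m t * -κ * (m t ^ (-κ) / m t)) :=
        add_le_add (mul_le_mul_of_nonneg_right (hule t ht) hP.le) hm'term
    _ = -ρ * (u t * m t ^ (-κ)) := by field_simp; ring

theorem rpow_le_rpow_sub_one_mul {m y K κ : ℝ} (hm : 0 < m) (hmy : m ≤ y) (hyK : y ≤ K)
    (hκ : 1 ≤ κ) : m ^ κ ≤ K ^ (κ - 1) * y := by
  rw [← div_mul_cancel₀ (m ^ κ) hm.ne', ← rpow_sub_one hm.ne']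
  exact mul_le_mul (rpow_le_rpow hm.le (hmy.trans hyK) (by linarith)) hmy hm.le
    (rpow_nonneg (hm.le.trans (hmy.trans hyK)) _)

theorem continuous_uncurry_of_locallyLipschitz_of_continuous {α : Type*} [TopologicalSpace α]
    {f : ℝ → α → ℝ}
    (hlip : ∀ C : ℝ, ∃ L : ℝ, 0 ≤ L ∧ ∀ q : α, ∀ X ∈ Icc (-C) C, ∀ Y ∈ Icc (-C) C,
      |f X q - f Y q| ≤ L * |X - Y|)
    (hcont : ∀ X, Continuous fun q => f X q) : Continuous fun p : ℝ × α => f p.1 p.2 := by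
  refine continuous_iff_continuousAt.2 fun p => ?_
  obtain ⟨L, hL0, hL⟩ := hlip (|p.1| + 1)
  have hOn : ContinuousOn (fun p : ℝ × α => f p.1 p.2) (Icc (-(|p.1| + 1)) (|p.1| + 1) ×ˢ univ) :=
    continuousOn_prod_of_continuousOn_lipschitzOnWith _ ⟨L, hL0⟩
      (fun X _ => (hcont X).continuousOn) fun q _ =>
        LipschitzOnWith.of_dist_le_mul fun X hX Y hY => by
          rw [Real.dist_eq, Real.dist_eq]; exact hL q X hX Y hY
  refine hOn.continuousAt (prod_mem_nhds (Icc_mem_nhds ?_ ?_) univ_mem) <;>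
    linarith [neg_abs_le p.1, le_abs_self p.1]

namespace EGTRates

variable {Q : Type*} [MetricSpace Q]

def growth (M : EGTRates Q) (x : ℝ) (q : Q) : ℝ := M.f₁ x q - M.f₂ x q

variable {M : EGTRates Q} {𝔔 𝔮 q : Q} {ϖ x C γ θ : ℝ}

theorem le_f₂ (hϖ : ∀ q, ϖ ≤ M.f₂ 0 q) (hx : 0 ≤ x) (q : Q) : ϖ ≤ M.f₂ x q :=
  (hϖ q).trans (M.f₂_mono q self_mem_Ici hx hx)

theorem f₂_pos (hx : 0 ≤ x) (q : Q) : 0 < M.f₂ x q := by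
  obtain ⟨ϖ, hϖ0, hϖ⟩ := M.f₂_inf_pos
  exact hϖ0.trans_le (le_f₂ hϖ hx q)

theorem growth_eq (hx : 0 ≤ x) (q : Q) : M.growth x q = M.f₂ x q * (M.R x q - 1) := by
  have := f₂_pos (M := M) hx q
  unfold growth R
  field_simp

theorem R_antitoneOn (q : Q) : AntitoneOn (fun x => M.R x q) (Ici 0) := fun x hx _ hy hxy =>
  div_le_div₀ (M.f₁_nonneg x q) (M.f₁_anti q hx hy hxy) (f₂_pos hx q) (M.f₂_mono q hx hy hxy)

theorem continuous_growth : Continuous fun p : ℝ × Q => M.growth p.1 p.2 :=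
  (continuous_uncurry_of_locallyLipschitz_of_continuous M.f₁_lip M.f₁_cont).sub
    (continuous_uncurry_of_locallyLipschitz_of_continuous M.f₂_lip M.f₂_cont)

theorem continuousOn_R : ContinuousOn (fun p : ℝ × Q => M.R p.1 p.2) (Ici 0 ×ˢ univ) :=
  (continuous_uncurry_of_locallyLipschitz_of_continuous M.f₁_lip M.f₁_cont).continuousOn.div
    (continuous_uncurry_of_locallyLipschitz_of_continuous M.f₂_lip M.f₂_cont).continuousOn
    fun p hp => (f₂_pos hp.1 p.2).ne'

theorem continuousOn_R_sub_R (𝔔 : Q) :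
    ContinuousOn (fun p : ℝ × Q => M.R p.1 𝔔 - M.R p.1 p.2) (Ici 0 ×ˢ univ) :=
  (continuousOn_R.comp (continuous_fst.prodMk continuous_const).continuousOn
    fun _ hp => ⟨hp.1, mem_univ _⟩).sub continuousOn_R

theorem continuous_R_zero : Continuous (M.R 0) :=
  (M.f₁_cont 0).div (M.f₂_cont 0) fun q => (f₂_pos le_rfl q).ne'

theorem exists_f₂_le [CompactSpace Q] (B : ℝ) : ∃ C, ∀ x ∈ Icc 0 B, ∀ q, M.f₂ x q ≤ C := by
  obtain ⟨C, hC⟩ := (isCompact_range (M.f₂_cont B)).bddAbove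
  exact ⟨C, fun x hx q => (M.f₂_mono q hx.1 (hx.1.trans hx.2) hx.2).trans (hC ⟨q, rfl⟩)⟩

theorem carCap_nonneg (q : Q) : 0 ≤ M.carCap q := by
  unfold carCap
  split_ifs
  exacts [Real.sInf_nonneg fun y hy => hy.1, le_rfl]

theorem one_le_R_zero_of_carCap_pos {q : Q} (hK : 0 < M.carCap q) : 1 ≤ M.R 0 q := by
  by_contra h
  simp [carCap, h] at hK

theorem neg_le_growth (hC : M.f₂ x q ≤ C) : -C ≤ M.growth x q := by
  have := M.f₁_nonneg x q
  unfold growth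
  linarith

theorem mul_le_growth (hϖ : ∀ q, ϖ ≤ M.f₂ 0 q) (hx : 0 ≤ x) (hθ : 0 ≤ θ)
    (hR : 1 + θ ≤ M.R x q) : ϖ * θ ≤ M.growth x q := by
  rw [growth_eq hx]
  calc ϖ * θ ≤ M.f₂ x q * θ := mul_le_mul_of_nonneg_right (le_f₂ hϖ hx q) hθ
    _ ≤ M.f₂ x q * (M.R x q - 1) :=
      mul_le_mul_of_nonneg_left (by linarith) (f₂_pos hx q).le

theorem growth_le_of_R_add_le (hϖ : ∀ q, ϖ ≤ M.f₂ 0 q) (hx : 0 ≤ x) (hγ : 0 ≤ γ)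
    (hR : 1 ≤ M.R x 𝔔) (hC : M.f₂ x q ≤ C) (hRγ : M.R x q + γ ≤ M.R x 𝔔) :
    M.growth x q ≤ C * (M.R x 𝔔 - 1) - ϖ * γ := by
  rw [growth_eq hx]
  have hf₂ := f₂_pos (M := M) hx q
  calc M.f₂ x q * (M.R x q - 1) ≤ M.f₂ x q * (M.R x 𝔔 - 1) - M.f₂ x q * γ := by nlinarith
    _ ≤ C * (M.R x 𝔔 - 1) - ϖ * γ := by
      have := mul_le_mul_of_nonneg_right hC (sub_nonneg.2 hR)
      have := mul_le_mul_of_nonneg_right (le_f₂ hϖ hx q) hγ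
      linarith

theorem eventually_sub_lt_growth (q₀ : Q) (B : ℝ) {ω : ℝ} (hω : 0 < ω) :
    ∀ᶠ q in 𝓝 q₀, ∀ x ∈ Icc 0 B, M.growth x q₀ - ω < M.growth x q := by
  refine isCompact_Icc.eventually_forall_of_forall_eventually fun x _ => ?_
  have hcont : Continuous fun z : Q × ℝ => M.growth z.2 z.1 :=
    continuous_growth.comp (continuous_snd.prodMk continuous_fst)
  have hcont₀ : Continuous fun z : Q × ℝ => M.growth z.2 q₀ - ω :=
    (continuous_growth.comp (continuous_snd.prodMk continuous_const)).sub continuous_const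
  exact hcont₀.continuousAt.eventually_lt hcont.continuousAt (sub_lt_self _ hω)

namespace Assumptions

variable (hA : M.Assumptions 𝔔 𝔮)
include hA

theorem R_lt (hx : 0 ≤ x) {q : Q} (hq : M.R 0 q < M.R 0 𝔔) : M.R x q < M.R x 𝔔 :=
  (hA.2.2.2.1 𝔔 q x hx).1 hq

theorem R_eq (hx : 0 ≤ x) {q : Q} (hq : q ∈ M.fittestClass 𝔔) : M.R x q = M.R x 𝔔 :=
  (hA.2.2.2.1 q 𝔔 x hx).2 hq

theorem R_le (hx : 0 ≤ x) (q : Q) : M.R x q ≤ M.R x 𝔔 :=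
  (hA.1 q).lt_or_eq.elim (fun h => (hA.R_lt hx h).le) fun h => (hA.R_eq hx h).le

theorem R_lt_one (hx : M.carCap 𝔔 < x) : M.R x 𝔔 < 1 := by
  have hK0 := carCap_nonneg (M := M) 𝔔
  by_cases h1 : 1 ≤ M.R 0 𝔔
  · obtain ⟨hK, huniq⟩ := hA.2.2.2.2.1 h1
    have hle : M.R x 𝔔 ≤ 1 := hK ▸ R_antitoneOn 𝔔 hK0 (hK0.trans hx.le) hx.le
    exact hle.lt_of_ne fun h => hx.ne' (huniq x (hK0.trans hx.le) h)
  · exact (R_antitoneOn 𝔔 self_mem_Ici (hK0.trans hx.le) (hK0.trans hx.le)).trans_lt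
      (not_le.1 h1)

theorem one_le_R (hK : 0 < M.carCap 𝔔) (hx : 0 ≤ x) (hxK : x ≤ M.carCap 𝔔) :
    1 ≤ M.R x 𝔔 := by
  have hanti : M.R (M.carCap 𝔔) 𝔔 ≤ M.R x 𝔔 := R_antitoneOn 𝔔 hx (hx.trans hxK) hxK
  rwa [(hA.2.2.2.2.1 (one_le_R_zero_of_carCap_pos hK)).1] at hanti

theorem one_lt_R (hx : 0 ≤ x) (hxK : x < M.carCap 𝔔) : 1 < M.R x 𝔔 := by
  have hK := hx.trans_lt hxK
  obtain ⟨-, huniq⟩ := hA.2.2.2.2.1 (one_le_R_zero_of_carCap_pos hK)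
  exact (hA.one_le_R hK hx hxK.le).lt_of_ne fun h => hxK.ne (huniq x hx h.symm)

theorem growth_le (hϖ : ∀ q, ϖ ≤ M.f₂ 0 q) {y : ℝ} (hy : 0 ≤ y) (hyx : y ≤ x)
    (hRy : M.R y 𝔔 ≤ 1) (q : Q) : M.growth x q ≤ ϖ * (M.R y 𝔔 - 1) := by
  have hx := hy.trans hyx
  have hR : M.R x q ≤ M.R y 𝔔 := (hA.R_le hx q).trans (R_antitoneOn (M := M) 𝔔 hy hx hyx)
  rw [growth_eq hx]
  calc M.f₂ x q * (M.R x q - 1) ≤ M.f₂ x q * (M.R y 𝔔 - 1) :=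
        mul_le_mul_of_nonneg_left (by linarith) (f₂_pos hx q).le
    _ ≤ ϖ * (M.R y 𝔔 - 1) := mul_le_mul_of_nonpos_right (le_f₂ hϖ hx q) (by linarith)

theorem mul_R_sub_one_le_growth (hϖ : ∀ q, ϖ ≤ M.f₂ 0 q) (hK : 0 < M.carCap 𝔔)
    (hx : x ∈ Icc 0 (M.carCap 𝔔)) (hq : q ∈ M.fittestClass 𝔔) :
    ϖ * (M.R x 𝔔 - 1) ≤ M.growth x q :=
  mul_le_growth hϖ hx.1 (sub_nonneg.2 (hA.one_le_R hK hx.1 hx.2))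
    (by rw [hA.R_eq hx.1 hq]; linarith)

variable [CompactSpace Q]

theorem exists_R_sub_lt_of_R_zero_sub_lt (B : ℝ) (hθ : 0 < θ) :
    ∃ c > 0, ∀ x ∈ Icc 0 B, ∀ q, M.R 0 𝔔 - c < M.R 0 q → M.R x 𝔔 - θ < M.R x q := by
  have hgap := (continuousOn_R_sub_R (M := M) 𝔔).mono
    (prod_mono (Icc_subset_Ici_self : Icc (0 : ℝ) B ⊆ Ici 0) subset_rfl)
  set A := (Icc 0 B ×ˢ univ) ∩ {p : ℝ × Q | θ ≤ M.R p.1 𝔔 - M.R p.1 p.2}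
  have hAcpt : IsCompact A := (isCompact_Icc.prod isCompact_univ).of_isClosed_subset
    (hgap.preimage_isClosed_of_isClosed (isClosed_Icc.prod isClosed_univ) isClosed_Ici)
    inter_subset_left
  obtain ⟨c, hc, hcA⟩ := hAcpt.exists_forall_le' (a := 0)
    (f := fun p : ℝ × Q => M.R 0 𝔔 - M.R 0 p.2)
    (continuous_const.sub (continuous_R_zero.comp continuous_snd)).continuousOn
    fun p hp => sub_pos.2 <| (hA.1 p.2).lt_of_ne fun h => by
      have : θ ≤ M.R p.1 𝔔 - M.R p.1 p.2 := hp.2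
      rw [hA.R_eq hp.1.1.1 h, sub_self] at this
      linarith
  refine ⟨c, hc, fun x hx q hq => lt_of_not_ge fun hle => ?_⟩
  have : c ≤ M.R 0 𝔔 - M.R 0 q := hcA (x, q) ⟨⟨hx, mem_univ q⟩, show θ ≤ _ by linarith⟩
  linarith

theorem exists_R_add_le (B : ℝ) {c : ℝ} (hc : 0 < c) :
    ∃ γ > 0, ∀ x ∈ Icc 0 B, ∀ q, M.R 0 q ≤ M.R 0 𝔔 - c → M.R x q + γ ≤ M.R x 𝔔 := by
  set U := {q : Q | M.R 0 q ≤ M.R 0 𝔔 - c}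
  have hgap := (continuousOn_R_sub_R (M := M) 𝔔).mono
    (prod_mono (Icc_subset_Ici_self : Icc (0 : ℝ) B ⊆ Ici 0) (subset_univ U))
  obtain ⟨γ, hγ, hγS⟩ := (isCompact_Icc.prod
    (isClosed_le continuous_R_zero continuous_const).isCompact).exists_forall_le' hgap
    (a := 0) fun p hp => sub_pos.2 (hA.R_lt hp.1.1 (by linarith [hp.2.out]))
  exact ⟨γ, hγ, fun x hx q hq => by linarith [hγS (x, q) ⟨hx, hq⟩]⟩

theorem exists_le_growth_of_R_zero_sub_lt {ε : ℝ} (hε : 0 < ε) (hεK : ε < M.carCap 𝔔) :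
    ∃ a > 0, ∃ c > 0, ∀ x ∈ Icc 0 (M.carCap 𝔔 - ε), ∀ q,
      M.R 0 𝔔 - c < M.R 0 q → a ≤ M.growth x q := by
  obtain ⟨ϖ, hϖ0, hϖ⟩ := M.f₂_inf_pos
  set δ := M.R (M.carCap 𝔔 - ε) 𝔔 - 1
  have hδ : 0 < δ := sub_pos.2 (hA.one_lt_R (by linarith) (by linarith))
  obtain ⟨c, hc, hcR⟩ := hA.exists_R_sub_lt_of_R_zero_sub_lt (M.carCap 𝔔) (half_pos hδ)
  refine ⟨ϖ * (δ / 2), by positivity, c, hc, fun x hx q hq => ?_⟩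
  have hRx : 1 + δ ≤ M.R x 𝔔 := by
    simpa [δ] using R_antitoneOn (M := M) 𝔔 hx.1 (hx.1.trans hx.2) hx.2
  have := hcR x ⟨hx.1, hx.2.trans (by linarith)⟩ q hq
  exact mul_le_growth hϖ hx.1 (by positivity) (by linarith)

theorem exists_growth_comparison (hK : 0 < M.carCap 𝔔) {q₀ : Q} (hq₀ : q₀ ∈ M.fittestClass 𝔔)
    {c : ℝ} (hc : 0 < c) : ∃ r > 0, ∃ κ ≥ 1, ∃ ρ > 0, ∃ g : ℝ → ℝ, ∀ x ∈ Icc 0 (M.carCap 𝔔),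
      (∀ q ∈ Metric.ball q₀ r, g x ≤ M.growth x q) ∧
      ∀ q, M.R 0 q ≤ M.R 0 𝔔 - c → M.growth x q ≤ κ * g x - ρ := by
  obtain ⟨ϖ, hϖ0, hϖ⟩ := M.f₂_inf_pos
  obtain ⟨C, hC⟩ := exists_f₂_le (M := M) (M.carCap 𝔔)
  obtain ⟨γ, hγ, hγU⟩ := hA.exists_R_add_le (M.carCap 𝔔) hc
  have hϖC : ϖ ≤ C := (le_f₂ hϖ le_rfl q₀).trans (hC 0 ⟨le_rfl, hK.le⟩ q₀)
  have hC0 : C ≠ 0 := (hϖ0.trans_le hϖC).ne'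
  have hκ : 1 ≤ C / ϖ := (one_le_div hϖ0).2 hϖC
  set ω := ϖ * γ / (2 * (C / ϖ))
  obtain ⟨r, hr, hball⟩ := Metric.eventually_nhds_iff_ball.1
    (eventually_sub_lt_growth (M := M) q₀ (M.carCap 𝔔) (ω := ω) (by positivity))
  refine ⟨r, hr, C / ϖ, hκ, ϖ * γ / 2, by positivity, fun x => ϖ * (M.R x 𝔔 - 1) - ω,
    fun x hx => ⟨fun q hq => ?_, fun q hq => ?_⟩⟩
  · linarith [hball q hq x hx, hA.mul_R_sub_one_le_growth hϖ hK hx hq₀]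
  · have := growth_le_of_R_add_le hϖ hx.1 hγ.le (hA.one_le_R hK hx.1 hx.2) (hC x hx q)
      (hγU x hx q hq)
    have hκg : C / ϖ * (ϖ * (M.R x 𝔔 - 1) - ω) = C * (M.R x 𝔔 - 1) - ϖ * γ / 2 := by
      simp only [ω]; field_simp
    linarith

end Assumptions

end EGTRates

theorem mul_measureReal_sub_le_integral {α : Type*} [MeasurableSpace α] {ν : Measure α}
    [IsFiniteMeasure ν] {g : α → ℝ} (hg : Integrable g ν) {U : Set α} (hU : MeasurableSet U)
    {a b : ℝ} (hUc : ∀ q ∈ Uᶜ, a ≤ g q) (hU' : ∀ q ∈ U, -b ≤ g q) :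
    a * ν.real univ - (a + b) * ν.real U ≤ ∫ q, g q ∂ν := by
  rw [← integral_add_compl hU hg]
  have hin := setIntegral_ge_of_const_le_real hU (measure_ne_top _ _) hU' hg.integrableOn
  have hout := setIntegral_ge_of_const_le_real hU.compl (measure_ne_top _ _) hUc hg.integrableOn
  rw [measureReal_compl hU] at hout
  linarith

namespace IsPureSelectionSolution

open EGTRates

variable {Q : Type*} [MetricSpace Q] [MeasurableSpace Q] [BorelSpace Q]
  {M : EGTRates Q} {μ : ℝ → Measure Q} {E : Set Q} {t c x : ℝ}

theorem hasDerivWithinAt (hμ : IsPureSelectionSolution M μ) (hE : MeasurableSet E) (ht : 0 ≤ t) :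
    HasDerivWithinAt (fun s => (μ s).real E)
      (∫ q in E, M.growth ((μ t).real univ) q ∂μ t) (Ici t) t :=
  (hμ.2 t ht E hE).mono (Ici_subset_Ici.2 ht)

theorem continuousOn (hμ : IsPureSelectionSolution M μ) (hE : MeasurableSet E) :
    ContinuousOn (fun s => (μ s).real E) (Ici 0) :=
  fun t ht => (hμ.2 t ht E hE).continuousWithinAt

variable [CompactSpace Q] (hμ : IsPureSelectionSolution M μ)
include hμ

theorem integrable_growth (t x : ℝ) : Integrable (M.growth x) (μ t) :=
  have := hμ.1 t
  (continuous_growth.comp (continuous_const.prodMk continuous_id)).integrable_of_hasCompactSupport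
    (HasCompactSupport.of_compactSpace _)

theorem mul_le_setIntegral_growth (hE : MeasurableSet E) (h : ∀ q ∈ E, c ≤ M.growth x q) :
    c * (μ t).real E ≤ ∫ q in E, M.growth x q ∂μ t :=
  have := hμ.1 t
  setIntegral_ge_of_const_le_real hE (measure_ne_top _ _) h (hμ.integrable_growth t x).integrableOn

theorem setIntegral_growth_le_mul (hE : MeasurableSet E) (h : ∀ q ∈ E, M.growth x q ≤ c) :
    ∫ q in E, M.growth x q ∂μ t ≤ c * (μ t).real E := by
  have := hμ.1 t
  have := setIntegral_mono_on (hμ.integrable_growth t x).integrableOn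
    (integrableOn_const (measure_ne_top _ _)) hE h
  rwa [setIntegral_const, smul_eq_mul, mul_comm] at this

theorem measureReal_le_exp_mul_rpow {U B : Set Q} (hU : MeasurableSet U) (hB : MeasurableSet B)
    {t₀ κ ρ : ℝ} (ht₀ : 0 ≤ t₀) (hκ : 0 ≤ κ) {g : ℝ → ℝ}
    (hBpos : ∀ t ∈ Ici t₀, 0 < (μ t).real B)
    (hgB : ∀ t ∈ Ici t₀, ∀ q ∈ B, g t ≤ M.growth ((μ t).real univ) q)
    (hgU : ∀ t ∈ Ici t₀, ∀ q ∈ U, M.growth ((μ t).real univ) q ≤ κ * g t - ρ) :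
    ∀ t ∈ Ici t₀, (μ t).real U ≤
      (μ t₀).real U * (μ t₀).real B ^ (-κ) * exp (-ρ * (t - t₀)) * (μ t).real B ^ κ := by
  intro t ht
  have hlyap := mul_rpow_neg_le_of_deriv_right (g := g)
    ((hμ.continuousOn hU).mono (Ici_subset_Ici.2 ht₀))
    (fun s hs => hμ.hasDerivWithinAt hU (ht₀.trans hs))
    ((hμ.continuousOn hB).mono (Ici_subset_Ici.2 ht₀))
    (fun s hs => hμ.hasDerivWithinAt hB (ht₀.trans hs))
    (fun _ _ => measureReal_nonneg) hBpos hκ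
    (fun s hs => hμ.setIntegral_growth_le_mul hU (hgU s hs))
    (fun s hs => hμ.mul_le_setIntegral_growth hB (hgB s hs)) t ht
  have hBt := hBpos t ht
  calc (μ t).real U = (μ t).real U * (μ t).real B ^ (-κ) * (μ t).real B ^ κ := by
        rw [rpow_neg hBt.le, mul_assoc, inv_mul_cancel₀ (rpow_pos_of_pos hBt κ).ne', mul_one]
    _ ≤ _ := mul_le_mul_of_nonneg_right hlyap (rpow_nonneg hBt.le κ)

variable {𝔔 𝔮 : Q} (hA : M.Assumptions 𝔔 𝔮)
include hA

theorem totalMass_le_of_le {c t₀ : ℝ} (hc : M.carCap 𝔔 ≤ c) (ht₀ : 0 ≤ t₀)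
    (h : (μ t₀).real univ ≤ c) : ∀ t ∈ Ici t₀, (μ t).real univ ≤ c :=
  image_le_of_deriv_right_nonpos_of_gt ((hμ.continuousOn .univ).mono (Ici_subset_Ici.2 ht₀))
    (fun t ht => hμ.hasDerivWithinAt .univ (ht₀.trans ht)) h fun t _ hct => by
      simpa using hμ.setIntegral_growth_le_mul (t := t) .univ fun q _ =>
        hA.growth_le (fun q => M.f₂_nonneg 0 q) measureReal_nonneg le_rfl
          (hA.R_lt_one (hc.trans_lt hct)).le q

theorem eventually_totalMass_lt {b : ℝ} (hb : M.carCap 𝔔 < b) :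
    ∀ᶠ t in atTop, (μ t).real univ < b := by
  obtain ⟨ϖ, hϖ0, hϖ⟩ := M.f₂_inf_pos
  obtain ⟨y, hKy, hyb⟩ := exists_between hb
  have hy : 0 < y := (carCap_nonneg 𝔔).trans_lt hKy
  have hRy := hA.R_lt_one hKy
  have hη : 0 < ϖ * (1 - M.R y 𝔔) * y := by have := sub_pos.2 hRy; positivity
  have hev := eventually_ge_of_deriv_right_ge (f := fun t => -(μ t).real univ) (a := 0) (c := -y)
    (B := 0) hη (hμ.continuousOn .univ).neg (fun t ht => (hμ.hasDerivWithinAt .univ ht).neg)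
    (fun t _ => neg_nonpos.2 measureReal_nonneg) fun t _ hle => by
      have hyX : y ≤ (μ t).real univ := by linarith
      have hint := hμ.setIntegral_growth_le_mul (t := t) .univ fun q _ =>
        hA.growth_le hϖ hy.le hyX hRy.le q
      have := mul_le_mul_of_nonpos_left hyX (mul_nonpos_of_nonneg_of_nonpos hϖ0.le
        (sub_nonpos.2 hRy.le))
      linarith
  filter_upwards [hev] with t ht
  linarith

theorem exists_neg_le_growth : ∃ C, ∀ t ∈ Ici (0 : ℝ), ∀ q, -C ≤ M.growth ((μ t).real univ) q := by
  obtain ⟨C, hC⟩ := exists_f₂_le (M := M) (max ((μ 0).real univ) (M.carCap 𝔔))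
  exact ⟨C, fun t ht q => neg_le_growth (hC _ ⟨measureReal_nonneg,
    hμ.totalMass_le_of_le hA (le_max_right _ _) le_rfl (le_max_left _ _) t ht⟩ q)⟩

theorem measureReal_pos {E : Set Q} (hE : MeasurableSet E) (h0 : 0 < (μ 0).real E) :
    ∀ t ∈ Ici 0, 0 < (μ t).real E := by
  obtain ⟨C, hC⟩ := hμ.exists_neg_le_growth hA
  intro t ht
  refine lt_of_lt_of_le ?_ (mul_exp_le_of_deriv_right_ge (β := -C) (hμ.continuousOn hE)
    (fun s hs => hμ.hasDerivWithinAt hE hs)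
    (fun s hs => hμ.mul_le_setIntegral_growth hE fun q _ => hC s hs q) t ht)
  positivity

theorem exists_measureReal_le_exp_mul_totalMass {q₀ : Q}
    (hq₀ : q₀ ∈ msupport (μ 0) ∩ M.fittestClass 𝔔) {t₀ : ℝ} (ht₀ : 0 ≤ t₀)
    (hK : 0 < M.carCap 𝔔) (hX : ∀ t ∈ Ici t₀, (μ t).real univ ≤ M.carCap 𝔔) {c : ℝ}
    (hc : 0 < c) : ∃ C ρ, 0 < ρ ∧ ∀ t ∈ Ici t₀,
      (μ t).real {q | M.R 0 q ≤ M.R 0 𝔔 - c} ≤ C * exp (-ρ * (t - t₀)) * (μ t).real univ := by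
  obtain ⟨r, hr, κ, hκ, ρ, hρ, g, hg⟩ := hA.exists_growth_comparison hK hq₀.2 hc
  have hX' : ∀ t ∈ Ici t₀, (μ t).real univ ∈ Icc 0 (M.carCap 𝔔) :=
    fun t ht => ⟨measureReal_nonneg, hX t ht⟩
  have hB0 : 0 < (μ 0).real (Metric.ball q₀ r) :=
    have := hμ.1 0; ENNReal.toReal_pos (hq₀.1 r hr).ne' (measure_ne_top _ _)
  have hBpos : ∀ t ∈ Ici t₀, 0 < (μ t).real (Metric.ball q₀ r) := fun t ht =>
    hμ.measureReal_pos hA measurableSet_ball hB0 t (ht₀.trans ht)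
  have hdecay := hμ.measureReal_le_exp_mul_rpow (U := {q | M.R 0 q ≤ M.R 0 𝔔 - c})
    (isClosed_le continuous_R_zero continuous_const).measurableSet measurableSet_ball ht₀
    (by linarith : 0 ≤ κ) (g := fun t => g ((μ t).real univ)) hBpos
    (fun t ht => (hg _ (hX' t ht)).1) fun t ht => (hg _ (hX' t ht)).2
  set C₀ := (μ t₀).real {q | M.R 0 q ≤ M.R 0 𝔔 - c} * (μ t₀).real (Metric.ball q₀ r) ^ (-κ)
  refine ⟨C₀ * M.carCap 𝔔 ^ (κ - 1), ρ, hρ, fun t ht => (hdecay t ht).trans ?_⟩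
  have hBX : (μ t).real (Metric.ball q₀ r) ≤ (μ t).real univ :=
    have := hμ.1 t; measureReal_mono (subset_univ _)
  have := mul_le_mul_of_nonneg_left (rpow_le_rpow_sub_one_mul (hBpos t ht) hBX (hX t ht) hκ)
    (by positivity : 0 ≤ C₀ * exp (-ρ * (t - t₀)))
  linarith

theorem eventually_measureReal_le_mul_totalMass {q₀ : Q}
    (hq₀ : q₀ ∈ msupport (μ 0) ∩ M.fittestClass 𝔔) {t₀ : ℝ} (ht₀ : 0 ≤ t₀)
    (hK : 0 < M.carCap 𝔔) (hX : ∀ t ∈ Ici t₀, (μ t).real univ ≤ M.carCap 𝔔) {c η : ℝ}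
    (hc : 0 < c) (hη : 0 < η) : ∀ᶠ t in atTop,
      (μ t).real {q | M.R 0 q ≤ M.R 0 𝔔 - c} ≤ η * (μ t).real univ := by
  obtain ⟨C, ρ, hρ, hdecay⟩ := hμ.exists_measureReal_le_exp_mul_totalMass hA hq₀ ht₀ hK hX hc
  have hlim : Tendsto (fun t => C * exp (-ρ * (t - t₀))) atTop (𝓝 0) := by
    have : Tendsto (fun t => ρ * (t - t₀)) atTop atTop :=
      (tendsto_atTop_add_const_right _ (-t₀) tendsto_id).const_mul_atTop hρ
    simpa using (tendsto_exp_neg_atTop_nhds_zero.comp this).const_mul C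
  filter_upwards [hlim.eventually (ge_mem_nhds hη), eventually_ge_atTop t₀] with t hCη ht
  exact (hdecay t ht).trans (mul_le_mul_of_nonneg_right hCη measureReal_nonneg)

theorem eventually_sub_le_totalMass {q₀ : Q} (hq₀ : q₀ ∈ msupport (μ 0) ∩ M.fittestClass 𝔔)
    {t₀ : ℝ} (ht₀ : 0 ≤ t₀) (hX : ∀ t ∈ Ici t₀, (μ t).real univ ≤ M.carCap 𝔔) {ε : ℝ}
    (hε : 0 < ε) (hεK : ε < M.carCap 𝔔) :
    ∀ᶠ t in atTop, M.carCap 𝔔 - ε ≤ (μ t).real univ := by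
  obtain ⟨C, hC⟩ := exists_f₂_le (M := M) (M.carCap 𝔔)
  obtain ⟨a, ha, c, hc, hfit⟩ := hA.exists_le_growth_of_R_zero_sub_lt hε hεK
  have hC0 : 0 ≤ C := (M.f₂_nonneg 0 q₀).trans (hC 0 ⟨le_rfl, (hε.trans hεK).le⟩ q₀)
  obtain ⟨T, hT⟩ := eventually_atTop.1 ((hμ.eventually_measureReal_le_mul_totalMass hA hq₀ ht₀
    (hε.trans hεK) hX hc (by positivity : 0 < a / (2 * (a + C)))).and (eventually_ge_atTop t₀))
  have hX0 : 0 < (μ 0).real univ :=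
    have := hμ.1 0
    ENNReal.toReal_pos ((hq₀.1 1 one_pos).trans_le (measure_mono (subset_univ _))).ne'
      (measure_ne_top _ _)
  have hT0 : 0 ≤ T := ht₀.trans (hT T le_rfl).2
  -- once the unfit mass is negligible, `X ≤ K - ε` forces `X' ≥ (a / 2) X`
  refine eventually_ge_of_deriv_right_ge_mul (a := T) (B := M.carCap 𝔔) (half_pos ha)
    ((hμ.continuousOn .univ).mono (Ici_subset_Ici.2 hT0))
    (fun t ht => hμ.hasDerivWithinAt .univ (hT0.trans ht))
    (fun t ht => hμ.measureReal_pos hA .univ hX0 t (hT0.trans ht))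
    (fun t ht => hX t ((hT t ht).2)) fun t ht hle => ?_
  have := hμ.1 t
  have hx : (μ t).real univ ∈ Icc 0 (M.carCap 𝔔) := ⟨measureReal_nonneg, hle.trans (by linarith)⟩
  have hsplit := mul_measureReal_sub_le_integral (hμ.integrable_growth t _)
    (isClosed_le continuous_R_zero continuous_const).measurableSet
    (fun q hq => hfit _ ⟨hx.1, hle⟩ q (lt_of_not_ge hq)) fun q _ => neg_le_growth (hC _ hx q)
  have hUa : (a + C) * (μ t).real {q | M.R 0 q ≤ M.R 0 𝔔 - c} ≤ a / 2 * (μ t).real univ := by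
    calc _ ≤ (a + C) * (a / (2 * (a + C)) * (μ t).real univ) :=
          mul_le_mul_of_nonneg_left (hT t ht).1 (by positivity)
      _ = a / 2 * (μ t).real univ := by field_simp
  rw [setIntegral_univ]
  linarith

theorem eventually_lt_totalMass (hsupp : (msupport (μ 0) ∩ M.fittestClass 𝔔).Nonempty) {b : ℝ}
    (hb : b < M.carCap 𝔔) : ∀ᶠ t in atTop, b < (μ t).real univ := by
  by_cases hle : ∃ t₀ ∈ Ici (0 : ℝ), (μ t₀).real univ ≤ M.carCap 𝔔
  · obtain ⟨t₀, ht₀, hX⟩ := hle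
    obtain ⟨q₀, hq₀⟩ := hsupp
    rcases lt_or_ge b 0 with hb0 | hb0
    · exact Eventually.of_forall fun t => hb0.trans_le measureReal_nonneg
    filter_upwards [hμ.eventually_sub_le_totalMass hA hq₀ ht₀
      (hμ.totalMass_le_of_le hA le_rfl ht₀ hX) (ε := (M.carCap 𝔔 - b) / 2) (by linarith)
      (by linarith)] with t ht
    linarith
  · push Not at hle
    filter_upwards [eventually_ge_atTop 0] with t ht
    exact hb.trans (hle t ht)

end IsPureSelectionSolution

/-- Total population limit: for a pure selection solution with
`supp(μ(0)) ∩ [𝔔]_R ≠ ∅` the total population converges to `K_𝔔`. -/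
theorem pureSelection_total_population_tendsto_carCap
    {Q : Type*} [MetricSpace Q] [CompactSpace Q] [MeasurableSpace Q] [BorelSpace Q]
    (M : EGTRates Q) (𝔔 𝔮 : Q) (hA : M.Assumptions 𝔔 𝔮)
    (μ : ℝ → Measure Q) (hμ : IsPureSelectionSolution M μ)
    (hsupp : (msupport (μ 0) ∩ M.fittestClass 𝔔).Nonempty) :
    Filter.Tendsto (fun t => ((μ t) Set.univ).toReal) Filter.atTop (nhds (M.carCap 𝔔)) :=
  tendsto_order.2 ⟨fun _ hb => hμ.eventually_lt_totalMass hA hsupp hb,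
    fun _ hb => hμ.eventually_totalMass_lt hA hb⟩

end
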